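/- Let 2 ≤ r ≤ k and let F be a graph. For all sufficiently large n (depending on F, r and k): if the r-graph H_r'(n,k) contains a copy of F^{(r)+}, then either F has chromatic number at most k, or F has a color-critical edge. -/

import Mathlib

open Finset
open scoped Classical

/-- An `r`-uniform hypergraph on vertex type `V`: a finite set of `r`-element
vertex subsets, the hyperedges. -/
structure HyperGraph (V : Type*) (r : ℕ) where
  edges : Finset (Finset V)
  uniform : ∀ e ∈ edges, e.card = r

namespace HyperGraph

variable {V α : Type*}

/-- A witness that the `r`-graph `G` contains a copy of the `r`-uniform expansion
`F^{(r)+}` of the graph `F`, with core embedding `φ` and, for each edge of `F`, a set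
of `r - 2` expansion vertices given by `S`.  The expansion vertices avoid the core and
are pairwise disjoint over distinct edges. -/
def IsExpansionWitness [DecidableEq V] {r : ℕ} (G : HyperGraph V r) (F : SimpleGraph α)
    (φ : α ↪ V) (S : Sym2 α → Finset V) : Prop :=
  (∀ a b, F.Adj a b → (S s(a, b)).card = r - 2) ∧
  (∀ a b, F.Adj a b → ∀ x ∈ S s(a, b), x ∉ Set.range φ) ∧
  (∀ e ∈ F.edgeSet, ∀ e' ∈ F.edgeSet, e ≠ e' → Disjoint (S e) (S e')) ∧
  (∀ a b, F.Adj a b → insert (φ a) (insert (φ b) (S s(a, b))) ∈ G.edges)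

/-- The `r`-graph `G` contains a copy of the expansion `F^{(r)+}` (i.e. a subhypergraph
isomorphic to it). -/
def ContainsExpansion [DecidableEq V] {r : ℕ} (G : HyperGraph V r) (F : SimpleGraph α) : Prop :=
  ∃ φ S, G.IsExpansionWitness F φ S

end HyperGraph

/-- `ex_r(n, F^{(r)+})`: the maximum number of hyperedges in an `n`-vertex
`F^{(r)+}`-free `r`-graph. -/
noncomputable def exExpansion (r n : ℕ) {α : Type*} (F : SimpleGraph α) : ℕ :=
  sSup {m | ∃ G : HyperGraph (Fin n) r, ¬ G.ContainsExpansion F ∧ G.edges.card = m}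

/-- `F` is contained in `G` as a (not necessarily induced) subgraph. -/
def GraphContains {α β : Type*} (F : SimpleGraph α) (G : SimpleGraph β) : Prop :=
  ∃ f : α ↪ β, ∀ a b, F.Adj a b → G.Adj (f a) (f b)

/-- The number of copies of `K_r` (i.e. `r`-cliques) in the graph `G`. -/
noncomputable def cliqueCount {V : Type*} [Fintype V] (G : SimpleGraph V) (r : ℕ) : ℕ :=
  Nat.card {s : Finset V // G.IsNClique r s}

/-- The generalized Turán number `ex(n, K_r, F)`: the maximum number of `r`-cliques
in an `n`-vertex `F`-free graph. -/
noncomputable def exClique (n r : ℕ) {α : Type*} (F : SimpleGraph α) : ℕ :=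
  sSup {m | ∃ G : SimpleGraph (Fin n), ¬ GraphContains F G ∧ cliqueCount G r = m}

/-- The number of copies of the complete `p`-uniform hypergraph `K_r^p` in a `p`-graph `G`:
the number of `r`-element vertex sets all of whose `p`-subsets are hyperedges. -/
noncomputable def hyperCliqueCount {V : Type*} [Fintype V] {p : ℕ} (G : HyperGraph V p)
    (r : ℕ) : ℕ :=
  Nat.card {R : Finset V // R.card = r ∧ ∀ e ⊆ R, e.card = p → e ∈ G.edges}

/-- `ex_p(n, K_r^p, F^{(p)+})`: the maximum number of copies of `K_r^p` in an `n`-vertex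
`F^{(p)+}`-free `p`-graph. -/
noncomputable def exHyperClique (p r n : ℕ) {α : Type*} (F : SimpleGraph α) : ℕ :=
  sSup {m | ∃ G : HyperGraph (Fin n) p, ¬ G.ContainsExpansion F ∧ hyperCliqueCount G r = m}

/-- `G` contains (a subgraph isomorphic to) a member of the decomposition family `D(F)`:
a bipartite graph obtained from a proper `(k+1)`-coloring of `F` by deleting `k - 1`
color classes. -/
def ContainsDecompMember {α β : Type*} (F : SimpleGraph α) (k : ℕ) (G : SimpleGraph β) : Prop :=
  ∃ c : α → Fin (k + 1), (∀ a b, F.Adj a b → c a ≠ c b) ∧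
    ∃ i j : Fin (k + 1), i ≠ j ∧ GraphContains (F.induce {a | c a = i ∨ c a = j}) G

/-- `biex(n, F)`: the maximum number of edges of an `n`-vertex graph containing no member
of the decomposition family `D(F)` (for a graph `F` of chromatic number `k+1`). -/
noncomputable def biex (n : ℕ) {α : Type*} (F : SimpleGraph α) (k : ℕ) : ℕ :=
  sSup {m | ∃ G : SimpleGraph (Fin n), ¬ ContainsDecompMember F k G ∧ Nat.card G.edgeSet = m}

/-- `t_r(n,k)`: the number of hyperedges of the complete balanced `k`-partite `r`-graph
`T_r(n,k)` (realized on `Fin n` with the balanced partition `v ↦ v % k`). -/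
noncomputable def turanHyperCount (r n k : ℕ) : ℕ :=
  Nat.card {e : Finset (Fin n) // e.card = r ∧
    Set.InjOn (fun v : Fin n => v.val % k) ↑e}

/-- `|E(T_r(n,k,i))|`: the number of hyperedges of the `r`-graph obtained from `T_r(n-i,k)`
by adding `i` new vertices (here the vertices with value `< i`) and all `r`-sets containing
at least one of them. -/
noncomputable def turanPlusCount (r n k i : ℕ) : ℕ :=
  Nat.card {e : Finset (Fin n) // e.card = r ∧
    ((∃ v ∈ e, v.val < i) ∨ Set.InjOn (fun v : Fin n => (v.val - i) % k) ↑e)}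

/-- `G` has a color-critical edge: an edge whose deletion decreases the chromatic number. -/
def HasColorCriticalEdge {β : Type*} (G : SimpleGraph β) : Prop :=
  ∃ a b, G.Adj a b ∧ (G.deleteEdges {s(a, b)}).chromaticNumber < G.chromaticNumber

/-- `B_{k+1,1}`: two copies of `K_{k+1}` sharing exactly one vertex (the vertex `k`). -/
def bowtie (k : ℕ) : SimpleGraph (Fin (2 * k + 1)) :=
  SimpleGraph.fromRel (fun a b => (a.val ≤ k ∧ b.val ≤ k) ∨ (k ≤ a.val ∧ k ≤ b.val))

/-- The `r`-graph `H'(m)` on `n` vertices: a complete `k`-partite `r`-graph with one part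
`V_1` of size `m` (the vertices with value `< m`) and `k-1` balanced parts on the remaining
vertices, together with all `r`-sets containing both `u` (the vertex `0`) and `v` (the
vertex `1`), and all `r`-sets containing `u` and `r-1` vertices outside `V_1`. -/
noncomputable def HprimeGraph (r n k m : ℕ) : HyperGraph (Fin n) r :=
  ⟨Finset.univ.filter (fun e : Finset (Fin n) => e.card = r ∧
      (Set.InjOn (fun v : Fin n => if v.val < m then 0 else (v.val - m) % (k - 1) + 1) ↑e
        ∨ ((∃ a ∈ e, a.val = 0) ∧ (∃ b ∈ e, b.val = 1))
        ∨ ((∃ a ∈ e, a.val = 0) ∧ ∀ w ∈ e, w.val ≠ 0 → m ≤ w.val))),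
    fun e he => ((Finset.mem_filter.mp he).2).1⟩

/-- `Δ*(t)G`: the `(r-1)`-graph of `t`-heavy `(r-1)`-sets, i.e. the `(r-1)`-element
vertex sets contained in at least `t` hyperedges of `G`. -/
noncomputable def shadowOp {V : Type*} [Fintype V] [DecidableEq V] {r : ℕ} (t : ℕ)
    (G : HyperGraph V r) : HyperGraph V (r - 1) :=
  ⟨Finset.univ.filter (fun A : Finset V =>
      A.card = r - 1 ∧ t ≤ (G.edges.filter (fun e => A ⊆ e)).card),
    fun A hA => ((Finset.mem_filter.mp hA).2).1⟩

/-- Iterated shadow operator: `iterShadow t G j = (Δ*(t))^j G`, a `(r-j)`-graph. -/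
noncomputable def iterShadow {V : Type*} [Fintype V] [DecidableEq V] (t : ℕ) {r : ℕ}
    (G : HyperGraph V r) : (j : ℕ) → HyperGraph V (r - j)
  | 0 => G
  | j + 1 => shadowOp t (iterShadow t G j)

/-- A vertex set `A` is `t`-fat with respect to `G`: there are at least `t` hyperedges
of `G` whose pairwise intersections all equal `A`. -/
def TFat {V : Type*} [DecidableEq V] {r : ℕ} (t : ℕ) (G : HyperGraph V r)
    (A : Finset V) : Prop :=
  ∃ E : Finset (Finset V), E ⊆ G.edges ∧ t ≤ E.card ∧
    ∀ e ∈ E, ∀ e' ∈ E, e ≠ e' → e ∩ e' = A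

/-- The graph `G(𝒢)` of `t`-fat pairs of the `r`-graph `G`. -/
def fatGraph {V : Type*} [DecidableEq V] {r : ℕ} (t : ℕ) (G : HyperGraph V r) :
    SimpleGraph V :=
  SimpleGraph.fromRel (fun x y => TFat t G {x, y})

/-- The `i`-graph whose hyperedges are the `t`-fat `i`-element vertex sets of `G`. -/
noncomputable def fatHyper {V : Type*} [Fintype V] [DecidableEq V] {r : ℕ} (t i : ℕ)
    (G : HyperGraph V r) : HyperGraph V i :=
  ⟨Finset.univ.filter (fun A : Finset V => A.card = i ∧ TFat t G A),
    fun A hA => ((Finset.mem_filter.mp hA).2).1⟩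

/-- The `r`-graph whose hyperedges are the vertex sets of the `r`-cliques of `G`. -/
noncomputable def cliqueHyper {V : Type*} [Fintype V] (G : SimpleGraph V) (r : ℕ) :
    HyperGraph V r :=
  ⟨Finset.univ.filter (fun e : Finset V => G.IsNClique r e),
    fun e he => ((Finset.mem_filter.mp he).2).card_eq⟩

/-- The `r`-graph on `n` vertices whose hyperedges are all `r`-sets containing the
fixed vertex `0`. -/
noncomputable def starHyper (n r : ℕ) : HyperGraph (Fin n) r :=
  ⟨Finset.univ.filter (fun e : Finset (Fin n) => e.card = r ∧ ∃ a ∈ e, a.val = 0),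
    fun e he => ((Finset.mem_filter.mp he).2).1⟩

/-- `σ(F)`: the minimum size of a color class over all proper `(k+1)`-colorings of `F`. -/
noncomputable def sigmaF {α : Type*} (F : SimpleGraph α) (k : ℕ) : ℕ :=
  sInf {m | ∃ c : α → Fin (k + 1), (∀ a b, F.Adj a b → c a ≠ c b) ∧
    ∃ i, m = Nat.card {a // c a = i}}

/-- The number of neighbors of `v` (in the graph `G`) lying in the part `i` of the
partition `P`. -/
noncomputable def nbrCount {n k : ℕ} (G : SimpleGraph (Fin n)) (P : Fin n → Fin k)
    (v : Fin n) (i : Fin k) : ℕ :=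
  (Finset.univ.filter (fun w => G.Adj v w ∧ P w = i)).card

/-- The size of the part `i` of the partition `P`. -/
noncomputable def partSize {n k : ℕ} (P : Fin n → Fin k) (i : Fin k) : ℕ :=
  (Finset.univ.filter (fun v => P v = i)).card

/-- Every copy (in the graph `G`) of a member of the decomposition family `D(F)` that lies
inside a single part of the partition `P` has at least two vertices in `B`. -/
def DecompInB {α : Type*} {n k : ℕ} (F : SimpleGraph α) (G : SimpleGraph (Fin n))
    (P : Fin n → Fin k) (B : Finset (Fin n)) : Prop :=
  ∀ c : α → Fin (k + 1), (∀ a b, F.Adj a b → c a ≠ c b) →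
    ∀ i j : Fin (k + 1), i ≠ j →
      ∀ ψ : {a : α // c a = i ∨ c a = j} ↪ Fin n,
        (∀ a b : {a : α // c a = i ∨ c a = j}, F.Adj a.1 b.1 → G.Adj (ψ a) (ψ b)) →
        (∀ a b : {a : α // c a = i ∨ c a = j}, P (ψ a) = P (ψ b)) →
        ∃ a b : {a : α // c a = i ∨ c a = j}, a ≠ b ∧ ψ a ∈ B ∧ ψ b ∈ B

/-
Colour each core vertex of a copy of `F^{(r)+}` in `H'(m)` by the part of `H(m)` containing
its image; this uses `k` colours. The hyperedge extending a monochromatic edge of `F` is not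
a hyperedge of `H(m)`, so it contains `u`, and when `u` is a core vertex it also contains `v`.
Since the expansion vertices of distinct edges are disjoint, at most one edge of `F` can be
monochromatic. Hence either the colouring is proper, or deleting that single edge makes it
proper while `χ(F) > k`, so the edge is colour-critical.
-/

namespace SimpleGraph

variable {α ι : Type*} [Fintype ι]

theorem chromaticNumber_le_or_hasColorCriticalEdge {F : SimpleGraph α} (c : α → ι)
    (h : ∀ a b a' b', F.Adj a b → c a = c b → F.Adj a' b' → c a' = c b' →
      s(a, b) = s(a', b')) :
    F.chromaticNumber ≤ Fintype.card ι ∨ HasColorCriticalEdge F := by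
  by_cases hχ : F.chromaticNumber ≤ Fintype.card ι
  · exact Or.inl hχ
  right
  obtain ⟨a, b, hab, hc⟩ : ∃ a b, F.Adj a b ∧ c a = c b := by
    by_contra! hproper
    exact hχ (Coloring.mk c fun hxy => hproper _ _ hxy).colorable.chromaticNumber_le
  refine ⟨a, b, hab, lt_of_le_of_lt ?_ (not_le.1 hχ)⟩
  refine (Coloring.mk c fun {x y} hxy hcxy => ?_).colorable.chromaticNumber_le
  rw [deleteEdges_adj] at hxy
  exact hxy.2 (h x y a b hxy.1 hcxy hab hc)

end SimpleGraph

namespace HyperGraph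

variable {V α : Type*} [DecidableEq V]

def expansionEdge (φ : α ↪ V) (S : Sym2 α → Finset V) (a b : α) : Finset V :=
  insert (φ a) (insert (φ b) (S s(a, b)))

@[simp]
theorem mem_expansionEdge {φ : α ↪ V} {S : Sym2 α → Finset V} {a b : α} {x : V} :
    x ∈ expansionEdge φ S a b ↔ x = φ a ∨ x = φ b ∨ x ∈ S s(a, b) := by
  simp only [expansionEdge, mem_insert]

namespace IsExpansionWitness

variable {r : ℕ} {G : HyperGraph V r} {F : SimpleGraph α} {φ : α ↪ V}
  {S : Sym2 α → Finset V} {a b a' b' : α}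

theorem expansionEdge_mem (hw : G.IsExpansionWitness F φ S) (hab : F.Adj a b) :
    expansionEdge φ S a b ∈ G.edges :=
  hw.2.2.2 a b hab

theorem eq_or_eq_of_mem_expansionEdge (hw : G.IsExpansionWitness F φ S) (hab : F.Adj a b)
    {c : α} (hc : φ c ∈ expansionEdge φ S a b) : c = a ∨ c = b := by
  rcases mem_expansionEdge.1 hc with h | h | h
  · exact Or.inl (φ.injective h)
  · exact Or.inr (φ.injective h)
  · exact absurd ⟨c, rfl⟩ (hw.2.1 a b hab _ h)

theorem sym2_eq_of_mem_expansionEdge_of_notMem_range (hw : G.IsExpansionWitness F φ S)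
    (hab : F.Adj a b) (hab' : F.Adj a' b') {x : V} (hx : x ∈ expansionEdge φ S a b)
    (hx' : x ∈ expansionEdge φ S a' b') (hxφ : x ∉ Set.range φ) : s(a, b) = s(a', b') := by
  have mem_S : ∀ {a b}, x ∈ expansionEdge φ S a b → x ∈ S s(a, b) := fun hx => by
    rcases mem_expansionEdge.1 hx with rfl | rfl | h
    · exact absurd ⟨_, rfl⟩ hxφ
    · exact absurd ⟨_, rfl⟩ hxφ
    · exact h
  by_contra hne
  exact Finset.disjoint_left.1 (hw.2.2.1 _ hab _ hab' hne) (mem_S hx) (mem_S hx')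

theorem sym2_eq_of_two_mem_expansionEdge (hw : G.IsExpansionWitness F φ S)
    (hab : F.Adj a b) (hab' : F.Adj a' b') {x y : V} (hxy : x ≠ y)
    (hx : x ∈ expansionEdge φ S a b) (hx' : x ∈ expansionEdge φ S a' b')
    (hy : y ∈ expansionEdge φ S a b) (hy' : y ∈ expansionEdge φ S a' b') :
    s(a, b) = s(a', b') := by
  by_cases hxφ : x ∉ Set.range φ
  · exact hw.sym2_eq_of_mem_expansionEdge_of_notMem_range hab hab' hx hx' hxφ
  by_cases hyφ : y ∉ Set.range φ
  · exact hw.sym2_eq_of_mem_expansionEdge_of_notMem_range hab hab' hy hy' hyφ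
  obtain ⟨c, rfl⟩ := not_not.1 hxφ
  obtain ⟨d, rfl⟩ := not_not.1 hyφ
  have hcd : c ≠ d := fun h => hxy (congrArg φ h)
  have hs : ∀ {a b}, F.Adj a b → φ c ∈ expansionEdge φ S a b → φ d ∈ expansionEdge φ S a b →
      s(a, b) = s(c, d) := fun hab hc hd =>
    (Sym2.mem_and_mem_iff hcd).1 ⟨Sym2.mem_iff.2 (hw.eq_or_eq_of_mem_expansionEdge hab hc),
      Sym2.mem_iff.2 (hw.eq_or_eq_of_mem_expansionEdge hab hd)⟩
  exact (hs hab hx hy).trans (hs hab' hx' hy').symm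

end IsExpansionWitness

end HyperGraph

namespace HprimeGraph

open HyperGraph

def part (k m v : ℕ) : ℕ :=
  if v < m then 0 else (v - m) % (k - 1) + 1

theorem part_lt {k : ℕ} (hk : 2 ≤ k) (m v : ℕ) : part k m v < k := by
  unfold part
  split_ifs
  · omega
  · have := Nat.mod_lt (v - m) (show 0 < k - 1 by omega)
    omega

theorem exists_val_zero_of_part_eq {r n k m : ℕ} {e : Finset (Fin n)}
    (he : e ∈ (HprimeGraph r n k m).edges) {p q : Fin n} (hp : p ∈ e) (hq : q ∈ e)
    (hpq : p ≠ q) (hpart : part k m p = part k m q) :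
    (∃ x ∈ e, x.val = 0) ∧ ((∃ y ∈ e, y.val = 1) ∨ ∀ w ∈ e, w.val ≠ 0 → m ≤ w.val) := by
  simp only [HprimeGraph, mem_filter, mem_univ, true_and] at he
  rcases he.2 with hinj | h | h
  · exact absurd (hinj hp hq hpart) hpq
  · exact ⟨h.1, Or.inl h.2⟩
  · exact ⟨h.1, Or.inr h.2⟩

variable {α : Type*} {F : SimpleGraph α} {r n k m : ℕ} {φ : α ↪ Fin n}
  {S : Sym2 α → Finset (Fin n)} {a b a' b' : α}

theorem exists_val_zero_mem_expansionEdge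
    (hw : (HprimeGraph r n k m).IsExpansionWitness F φ S) (hab : F.Adj a b)
    (hc : part k m (φ a) = part k m (φ b)) : ∃ x ∈ expansionEdge φ S a b, x.val = 0 :=
  (exists_val_zero_of_part_eq (hw.expansionEdge_mem hab) (p := φ a) (q := φ b)
    (by simp) (by simp) (φ.injective.ne hab.ne) hc).1

theorem exists_val_one_mem_expansionEdge (hm : 0 < m)
    (hw : (HprimeGraph r n k m).IsExpansionWitness F φ S) (hab : F.Adj a b)
    (hc : part k m (φ a) = part k m (φ b)) {c : α} (hcE : φ c ∈ expansionEdge φ S a b)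
    (hc0 : (φ c).val = 0) : ∃ y ∈ expansionEdge φ S a b, y.val = 1 := by
  refine ((exists_val_zero_of_part_eq (hw.expansionEdge_mem hab) (p := φ a) (q := φ b)
    (by simp) (by simp) (φ.injective.ne hab.ne) hc).2.resolve_right fun hall => ?_)
  -- The other endpoint `d` lies in `V_1` together with `u = φ c`, yet is not `u`.
  obtain ⟨d, hdE, hdc, hpart⟩ : ∃ d, φ d ∈ expansionEdge φ S a b ∧ d ≠ c ∧
      part k m (φ d) = part k m (φ c) := by
    rcases hw.eq_or_eq_of_mem_expansionEdge hab hcE with rfl | rfl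
    · exact ⟨b, by simp, hab.ne', hc.symm⟩
    · exact ⟨a, by simp, hab.ne, hc⟩
  have hmd := hall (φ d) hdE fun h => hdc (φ.injective (Fin.ext (h.trans hc0.symm)))
  simp only [part, hc0, hm, if_true, not_lt.2 hmd, if_false] at hpart
  omega

theorem sym2_eq_of_part_eq (hm : 0 < m)
    (hw : (HprimeGraph r n k m).IsExpansionWitness F φ S)
    (hab : F.Adj a b) (hc : part k m (φ a) = part k m (φ b))
    (hab' : F.Adj a' b') (hc' : part k m (φ a') = part k m (φ b')) :
    s(a, b) = s(a', b') := by
  obtain ⟨x, hx, hx0⟩ := exists_val_zero_mem_expansionEdge hw hab hc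
  obtain ⟨x', hx', hx0'⟩ := exists_val_zero_mem_expansionEdge hw hab' hc'
  obtain rfl : x = x' := Fin.ext (hx0.trans hx0'.symm)
  by_cases hxφ : x ∈ Set.range φ
  · obtain ⟨c, rfl⟩ := hxφ
    obtain ⟨y, hy, hy1⟩ := exists_val_one_mem_expansionEdge hm hw hab hc hx hx0
    obtain ⟨y', hy', hy1'⟩ := exists_val_one_mem_expansionEdge hm hw hab' hc' hx' hx0
    obtain rfl : y = y' := Fin.ext (hy1.trans hy1'.symm)
    exact hw.sym2_eq_of_two_mem_expansionEdge hab hab' (by rintro rfl; omega) hx hx' hy hy'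
  · exact hw.sym2_eq_of_mem_expansionEdge_of_notMem_range hab hab' hx hx' hxφ

end HprimeGraph

theorem statement_10_general {α : Type*} (F : SimpleGraph α) (k r : ℕ)
    (hr : 2 ≤ r) (hrk : r ≤ k) :
    ∃ n₀ : ℕ, ∀ n ≥ n₀, ∀ m, 2 ≤ m → m ≤ n →
      (∀ m', 2 ≤ m' → m' ≤ n →
        (HprimeGraph r n k m').edges.card ≤ (HprimeGraph r n k m).edges.card) →
      (HprimeGraph r n k m).ContainsExpansion F →
      F.chromaticNumber ≤ (k : ℕ∞) ∨ HasColorCriticalEdge F := by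
  refine ⟨0, fun n _ m hm _ _ ⟨φ, S, hw⟩ => ?_⟩
  let c : α → Fin k := fun a => ⟨HprimeGraph.part k m (φ a), HprimeGraph.part_lt (by omega) _ _⟩
  have h := SimpleGraph.chromaticNumber_le_or_hasColorCriticalEdge c
    fun a b a' b' hab hc hab' hc' => HprimeGraph.sym2_eq_of_part_eq (by omega) hw
      hab (congrArg Fin.val hc) hab' (congrArg Fin.val hc')
  simpa using h

/-- Let `2 ≤ r ≤ k`. For all sufficiently large `n`: if a hypergraph
`H'(m)` with the maximum number of hyperedges (i.e. `H_r'(n,k)`) contains a copy of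
`F^{(r)+}`, then `χ(F) ≤ k` or `F` has a color-critical edge. -/
theorem statement_10 {α : Type*} [Fintype α] (F : SimpleGraph α) (k r : ℕ)
    (hr : 2 ≤ r) (hrk : r ≤ k) :
    ∃ n₀ : ℕ, ∀ n ≥ n₀, ∀ m, 2 ≤ m → m ≤ n →
      (∀ m', 2 ≤ m' → m' ≤ n →
        (HprimeGraph r n k m').edges.card ≤ (HprimeGraph r n k m).edges.card) →
      (HprimeGraph r n k m).ContainsExpansion F →
      F.chromaticNumber ≤ (k : ℕ∞) ∨ HasColorCriticalEdge F :=
  statement_10_general F k r hr hrk
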